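/- Let p be a natural number, let U ⊆ ℝᵖ be a convex open set, let L_a : ℝ → ℝ (a = 1, …, k) and C_α : ℝ → ℝ (α = 1, …, P) be smooth functions, let n^a ∈ ℝᵖ, μ_α ∈ ℝ, η^α ∈ ℝᵖ, c_α ∈ ℝ be constants, and let f : U → ℝ be a smooth function satisfying Σ_{α=1}^{P} μ_α C_α(μ_α f(q) + ⟨η^α, q⟩ + c_α) = 0 for all q ∈ U. Define F̄_{ji}(v) = Σ_{a=1}^{k} n^a_j n^a_i L_a(⟨n^a, v⟩) and Ḡ_j(q) = Σ_{α=1}^{P} η^α_j C_α(μ_α f(q) + ⟨η^α, q⟩ + c_α). Then there exists a smooth function Ē : U × ℝᵖ → ℝ such that for all q ∈ U and all v, w ∈ ℝᵖ: Σ_{j=1}^{p} [ Σ_{i=1}^{p} F̄_{ji}(v) w^i + Ḡ_j(q) ] v^j = Σ_{j=1}^{p} (∂Ē/∂q^j)(q,v) v^j + Σ_{j=1}^{p} (∂Ē/∂v^j)(q,v) w^j. -/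

import Mathlib

/-!
Take primitives `B_α` of `C_α` and `A_a` of `s ↦ s L_a(s)`, write
`u_α(q) = μ_α f(q) + ⟨η^α, q⟩ + c_α`, and set `Ē(q, v) = Σ_α B_α(u_α(q)) + Σ_a A_a(⟨n^a, v⟩)`.
The right-hand side is the derivative of `Ē` at `(q, v)` along `(v, w)`, namely
`Σ_α C_α(u_α(q)) (μ_α Df(q) v + ⟨η^α, v⟩) + Σ_a L_a(⟨n^a, v⟩) ⟨n^a, v⟩ ⟨n^a, w⟩`.
The constraint kills the `Df(q) v` term, and what remains is `⟨v, F̄(v) w + Ḡ(q)⟩`.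
-/

open Matrix

noncomputable def primitive (g : ℝ → ℝ) (x : ℝ) : ℝ := ∫ t in (0 : ℝ)..x, g t

theorem hasDerivAt_primitive {g : ℝ → ℝ} (hg : Continuous g) (x : ℝ) :
    HasDerivAt (primitive g) (g x) x :=
  (hg.integral_hasStrictDerivAt 0 x).hasDerivAt

theorem contDiff_primitive {g : ℝ → ℝ} {m : ℕ∞} (hg : ContDiff ℝ m g) :
    ContDiff ℝ m (primitive g) := by
  have hderiv : deriv (primitive g) = g :=
    funext fun x => (hasDerivAt_primitive hg.continuous x).deriv
  refine (contDiff_succ_iff_deriv.2 ⟨fun x => ?_, by simp, by rwa [hderiv]⟩).of_succ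
  exact (hasDerivAt_primitive hg.continuous x).differentiableAt

theorem fderiv_sum_primitive_comp_apply {E ι : Type*} [NormedAddCommGroup E] [NormedSpace ℝ E]
    [Fintype ι] {φ : ι → ℝ → ℝ} (hφ : ∀ i, Continuous (φ i)) {u : ι → E → ℝ} {x : E}
    (hu : ∀ i, DifferentiableAt ℝ (u i) x) (h : E) :
    fderiv ℝ (fun y => ∑ i, primitive (φ i) (u i y)) x h
      = ∑ i, φ i (u i x) * fderiv ℝ (u i) x h := by
  have hsum : HasFDerivAt (fun y => ∑ i, primitive (φ i) (u i y))
      (∑ i, φ i (u i x) • fderiv ℝ (u i) x) x := HasFDerivAt.fun_sum fun i _ =>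
    (hasDerivAt_primitive (hφ i) (u i x)).comp_hasFDerivAt x (hu i).hasFDerivAt
  rw [hsum.fderiv]
  simp

theorem fderiv_add_comp_fst_snd_apply {E F G : Type*} [NormedAddCommGroup E] [NormedSpace ℝ E]
    [NormedAddCommGroup F] [NormedSpace ℝ F] [NormedAddCommGroup G] [NormedSpace ℝ G]
    {f : E → G} {g : F → G} {x : E} {y : F} (hf : DifferentiableAt ℝ f x)
    (hg : DifferentiableAt ℝ g y) (h : E) (k : F) :
    fderiv ℝ (fun z : E × F => f z.1 + g z.2) (x, y) (h, k) = fderiv ℝ f x h + fderiv ℝ g y k := by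
  have hsum : HasFDerivAt (fun z : E × F => f z.1 + g z.2)
      ((fderiv ℝ f x).comp (.fst ℝ E F) + (fderiv ℝ g y).comp (.snd ℝ E F)) (x, y) :=
    (hf.hasFDerivAt.comp (x, y) hasFDerivAt_fst).add (hg.hasFDerivAt.comp (x, y) hasFDerivAt_snd)
  simp [hsum.fderiv]

theorem sum_map_single_mul {R ι F : Type*} [CommSemiring R] [Fintype ι] [DecidableEq ι]
    [FunLike F (ι → R) R] [LinearMapClass F R (ι → R) R] (φ : F) (v : ι → R) :
    ∑ j, φ (Pi.single j 1) * v j = φ v := by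
  conv_rhs => rw [← Finset.univ_sum_single v, map_sum]
  refine Finset.sum_congr rfl fun j _ => ?_
  rw [mul_comm, ← smul_eq_mul, ← map_smul, ← Pi.single_smul', smul_eq_mul, mul_one]

theorem sum_map_single_mul_add {R ι F : Type*} [CommSemiring R] [Fintype ι] [DecidableEq ι]
    [FunLike F ((ι → R) × (ι → R)) R] [LinearMapClass F R ((ι → R) × (ι → R)) R] (φ : F)
    (v w : ι → R) :
    ∑ j, φ (Pi.single j 1, 0) * v j + ∑ j, φ (0, Pi.single j 1) * w j = φ (v, w) := by
  have hv := sum_map_single_mul ((φ : (ι → R) × (ι → R) →ₗ[R] R).comp (LinearMap.inl R _ _)) v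
  have hw := sum_map_single_mul ((φ : (ι → R) × (ι → R) →ₗ[R] R).comp (LinearMap.inr R _ _)) w
  simp only [LinearMap.comp_apply, LinearMap.inl_apply, LinearMap.inr_apply,
    LinearMap.coe_coe] at hv hw
  rw [hv, hw, ← map_add, Prod.mk_add_mk, add_zero, zero_add]

theorem sum_sum_mul_sum_mul_eq_sum_dotProduct {R ι κ : Type*} [CommSemiring R] [Fintype ι]
    [Fintype κ] (n : κ → ι → R) (l : κ → R) (v w : ι → R) :
    ∑ j, (∑ i, (∑ a, n a j * n a i * l a) * w i) * v j = ∑ a, (n a ⬝ᵥ v) * l a * (n a ⬝ᵥ w) := by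
  simp only [dotProduct, Finset.sum_mul, Finset.mul_sum]
  rw [Finset.sum_comm]
  conv_rhs => rw [Finset.sum_comm]
  refine Finset.sum_congr rfl fun i _ => ?_
  rw [Finset.sum_comm]
  exact Finset.sum_congr rfl fun a _ => Finset.sum_congr rfl fun j _ => by ring

theorem sum_sum_mul_eq_sum_dotProduct {R ι κ : Type*} [CommSemiring R] [Fintype ι]
    [Fintype κ] (η : κ → ι → R) (g : κ → R) (v : ι → R) :
    ∑ j, (∑ α, η α j * g α) * v j = ∑ α, g α * (η α ⬝ᵥ v) := by
  simp only [dotProduct, Finset.sum_mul, Finset.mul_sum]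
  rw [Finset.sum_comm]
  exact Finset.sum_congr rfl fun α _ => Finset.sum_congr rfl fun j _ => by ring

section Energy

variable {ι κ σ : Type*} [Fintype ι] [Fintype κ] [Fintype σ]

noncomputable def dotProductCLM (η : σ → ℝ) : (σ → ℝ) →L[ℝ] ℝ :=
  LinearMap.toContinuousLinearMap (dotProductBilin ℝ ℝ η)

@[simp]
theorem dotProductCLM_apply (η v : σ → ℝ) : dotProductCLM η v = η ⬝ᵥ v := rfl

theorem hasFDerivAt_dotProduct (η q : σ → ℝ) : HasFDerivAt (η ⬝ᵥ ·) (dotProductCLM η) q :=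
  (dotProductCLM η).hasFDerivAt

noncomputable def capacitorEnergy (C : ι → ℝ → ℝ) (μ : ι → ℝ) (η : ι → σ → ℝ) (c : ι → ℝ)
    (f : (σ → ℝ) → ℝ) (q : σ → ℝ) : ℝ :=
  ∑ α, primitive (C α) (μ α * f q + η α ⬝ᵥ q + c α)

noncomputable def inductorEnergy (L : κ → ℝ → ℝ) (n : κ → σ → ℝ) (v : σ → ℝ) : ℝ :=
  ∑ a, primitive (fun s => s * L a s) (n a ⬝ᵥ v)

variable {C : ι → ℝ → ℝ} {μ : ι → ℝ} {η : ι → σ → ℝ} {c : ι → ℝ} {f : (σ → ℝ) → ℝ}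
  {L : κ → ℝ → ℝ} {n : κ → σ → ℝ} {m : ℕ∞}

theorem contDiffOn_capacitorEnergy {U : Set (σ → ℝ)} (hC : ∀ α, ContDiff ℝ m (C α))
    (hf : ContDiffOn ℝ m f U) : ContDiffOn ℝ m (capacitorEnergy C μ η c f) U :=
  ContDiffOn.sum fun α _ => (contDiff_primitive (hC α)).comp_contDiffOn <|
    ((contDiffOn_const.mul hf).add (dotProductCLM (η α)).contDiff.contDiffOn).add contDiffOn_const

theorem contDiff_inductorEnergy (hL : ∀ a, ContDiff ℝ m (L a)) :
    ContDiff ℝ m (inductorEnergy L n) :=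
  ContDiff.sum fun a _ =>
    (contDiff_primitive (contDiff_id.mul (hL a))).comp (dotProductCLM (n a)).contDiff

theorem fderiv_capacitorEnergy_apply (hC : ∀ α, Continuous (C α)) {q : σ → ℝ}
    (hf : DifferentiableAt ℝ f q) (v : σ → ℝ) :
    fderiv ℝ (capacitorEnergy C μ η c f) q v
      = ∑ α, C α (μ α * f q + η α ⬝ᵥ q + c α) * (μ α * fderiv ℝ f q v + η α ⬝ᵥ v) := by
  have hu : ∀ α, HasFDerivAt (fun q => μ α * f q + η α ⬝ᵥ q + c α)
      (μ α • fderiv ℝ f q + dotProductCLM (η α)) q := fun α =>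
    ((hf.hasFDerivAt.const_mul (μ α)).add (hasFDerivAt_dotProduct (η α) q)).add_const (c α)
  unfold capacitorEnergy
  rw [fderiv_sum_primitive_comp_apply hC fun α => (hu α).differentiableAt]
  simp [(hu _).fderiv]

theorem fderiv_capacitorEnergy_apply_of_constraint (hC : ∀ α, Continuous (C α)) {q : σ → ℝ}
    (hf : DifferentiableAt ℝ f q)
    (hcon : ∑ α, μ α * C α (μ α * f q + η α ⬝ᵥ q + c α) = 0) (v : σ → ℝ) :
    fderiv ℝ (capacitorEnergy C μ η c f) q v
      = ∑ α, C α (μ α * f q + η α ⬝ᵥ q + c α) * (η α ⬝ᵥ v) := by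
  rw [fderiv_capacitorEnergy_apply hC hf]
  calc _ = (∑ α, μ α * C α (μ α * f q + η α ⬝ᵥ q + c α)) * fderiv ℝ f q v
        + ∑ α, C α (μ α * f q + η α ⬝ᵥ q + c α) * (η α ⬝ᵥ v) := by
          simp only [mul_add, Finset.sum_add_distrib, Finset.sum_mul]
          congr 1
          exact Finset.sum_congr rfl fun α _ => by ring
    _ = _ := by rw [hcon, zero_mul, zero_add]

theorem fderiv_inductorEnergy_apply (hL : ∀ a, Continuous (L a)) (v w : σ → ℝ) :
    fderiv ℝ (inductorEnergy L n) v w = ∑ a, (n a ⬝ᵥ v) * L a (n a ⬝ᵥ v) * (n a ⬝ᵥ w) := by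
  unfold inductorEnergy
  rw [fderiv_sum_primitive_comp_apply (φ := fun a s => s * L a s) (u := fun a v => n a ⬝ᵥ v)
    (fun a => continuous_id.mul (hL a)) fun a => (hasFDerivAt_dotProduct (n a) v).differentiableAt]
  simp [(hasFDerivAt_dotProduct _ _).fderiv]

end Energy

theorem reduced_birkhoffian_energy_general (p k P : ℕ)
    (U : Set (Fin p → ℝ)) (hUo : IsOpen U)
    (L : Fin k → ℝ → ℝ) (hL : ∀ a, ContDiff ℝ (⊤ : ℕ∞) (L a))
    (C : Fin P → ℝ → ℝ) (hC : ∀ α, ContDiff ℝ (⊤ : ℕ∞) (C α))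
    (n : Fin k → Fin p → ℝ) (μ : Fin P → ℝ) (η : Fin P → Fin p → ℝ) (c : Fin P → ℝ)
    (f : (Fin p → ℝ) → ℝ) (hf : ContDiffOn ℝ (⊤ : ℕ∞) f U)
    (hcon : ∀ q ∈ U, ∑ α, μ α * C α (μ α * f q + (∑ i, η α i * q i) + c α) = 0) :
    ∃ E : (Fin p → ℝ) × (Fin p → ℝ) → ℝ,
      ContDiffOn ℝ (⊤ : ℕ∞) E (U ×ˢ (Set.univ : Set (Fin p → ℝ))) ∧
      ∀ q ∈ U, ∀ v w : Fin p → ℝ,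
        ∑ j, ((∑ i, (∑ a, n a j * n a i * L a (∑ s, n a s * v s)) * w i)
              + ∑ α, η α j * C α (μ α * f q + (∑ i, η α i * q i) + c α)) * v j
        = ∑ j, (fderiv ℝ E (q, v) (Pi.single j 1, 0)) * v j
          + ∑ j, (fderiv ℝ E (q, v) (0, Pi.single j 1)) * w j := by
  have hcap := contDiffOn_capacitorEnergy (μ := μ) (η := η) (c := c) hC hf
  have hind := contDiff_inductorEnergy (n := n) hL
  refine ⟨fun z => capacitorEnergy C μ η c f z.1 + inductorEnergy L n z.2,
    (hcap.comp contDiffOn_fst fun z hz => hz.1).add (hind.comp contDiff_snd).contDiffOn,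
    fun q hq v w => ?_⟩
  have hq' : U ∈ nhds q := hUo.mem_nhds hq
  -- The coordinate sums `∑ i, η α i * q i` of the statement are `η α ⬝ᵥ q` by unfolding.
  rw [sum_map_single_mul_add, fderiv_add_comp_fst_snd_apply
      ((hcap.contDiffAt hq').differentiableAt (by simp)) (hind.differentiable (by simp) v),
    fderiv_capacitorEnergy_apply_of_constraint (fun α => (hC α).continuous)
      ((hf.contDiffAt hq').differentiableAt (by simp)) (hcon q hq),
    fderiv_inductorEnergy_apply (fun a => (hL a).continuous), add_comm]
  simp only [add_mul, Finset.sum_add_distrib]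
  exact congr_arg₂ (· + ·) (sum_sum_mul_sum_mul_eq_sum_dotProduct n _ v w)
    (sum_sum_mul_eq_sum_dotProduct η _ v)

/-- Existence of a smooth energy function Ē for the reduced Birkhoffian of an RLC network
with a pure capacitor loop: with F̄_{ji}(v) = Σ_a n^a_j n^a_i L_a(⟨n^a,v⟩) and
Ḡ_j(q) = Σ_α η^α_j C_α(μ_α f(q) + ⟨η^α,q⟩ + c_α), there is Ē smooth on U × ℝᵖ with
Σ_j [Σ_i F̄_{ji}(v) w^i + Ḡ_j(q)] v^j = Σ_j ∂Ē/∂q^j v^j + Σ_j ∂Ē/∂v^j w^j. -/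
theorem reduced_birkhoffian_energy (p k P : ℕ)
    (U : Set (Fin p → ℝ)) (hUo : IsOpen U) (hUc : Convex ℝ U)
    (L : Fin k → ℝ → ℝ) (hL : ∀ a, ContDiff ℝ (⊤ : ℕ∞) (L a))
    (C : Fin P → ℝ → ℝ) (hC : ∀ α, ContDiff ℝ (⊤ : ℕ∞) (C α))
    (n : Fin k → Fin p → ℝ) (μ : Fin P → ℝ) (η : Fin P → Fin p → ℝ) (c : Fin P → ℝ)
    (f : (Fin p → ℝ) → ℝ) (hf : ContDiffOn ℝ (⊤ : ℕ∞) f U)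
    (hcon : ∀ q ∈ U, ∑ α, μ α * C α (μ α * f q + (∑ i, η α i * q i) + c α) = 0) :
    ∃ E : (Fin p → ℝ) × (Fin p → ℝ) → ℝ,
      ContDiffOn ℝ (⊤ : ℕ∞) E (U ×ˢ (Set.univ : Set (Fin p → ℝ))) ∧
      ∀ q ∈ U, ∀ v w : Fin p → ℝ,
        ∑ j, ((∑ i, (∑ a, n a j * n a i * L a (∑ s, n a s * v s)) * w i)
              + ∑ α, η α j * C α (μ α * f q + (∑ i, η α i * q i) + c α)) * v j
        = ∑ j, (fderiv ℝ E (q, v) (Pi.single j 1, 0)) * v j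
          + ∑ j, (fderiv ℝ E (q, v) (0, Pi.single j 1)) * w j :=
  reduced_birkhoffian_energy_general p k P U hUo L hL C hC n μ η c f hf hcon
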